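/- Fix an integer m ≥ 1, ε̄ > 0 and C_P > 0. Let (A_n)_{n∈ℤ} be m×m matrices with A_n(i,j) ≥ ε̄ for all i,j and ‖A_n‖ ≤ (m ε̄)^{−1} for all n, and suppose the potential is bounded: |𝒰_n| ≤ C_P for all n ∈ ℤ, where 𝒰_n = log‖A_n ⋯ A_1‖ for n ≥ 1, 𝒰_0 = 0, and 𝒰_n = −log‖A_0 ⋯ A_{n+1}‖ for n ≤ −1. Then there is a constant C̃_P such that for all integers n > k and every nonzero nonnegative vector x ∈ ℝ^m: e^{−C̃_P} ‖x‖ ≤ (A_n A_{n−1} ⋯ A_{k+1} x)(i) ≤ e^{C̃_P} ‖x‖ for every coordinate i ∈ {1,…,m}. -/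

import Mathlib

/-- `prodApply A a k v = A_{a+k} ⋯ A_{a+1} v`. -/
def prodApply {m : ℕ} (A : ℤ → Matrix (Fin m) (Fin m) ℝ) (a : ℤ) :
    ℕ → (Fin m → ℝ) → (Fin m → ℝ)
  | 0, v => v
  | k + 1, v => (A (a + k + 1)).mulVec (prodApply A a k v)

/-- `prodMat A a k = A_{a+k} ⋯ A_{a+1}` (the empty product is the identity). -/
def prodMat {m : ℕ} (A : ℤ → Matrix (Fin m) (Fin m) ℝ) (a : ℤ) :
    ℕ → Matrix (Fin m) (Fin m) ℝ
  | 0 => 1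
  | k + 1 => A (a + k + 1) * prodMat A a k

/-- The matrix norm `‖A‖ = max_i ∑_j |A(i,j)|` (realized via the sup norm on `Fin m → ℝ`). -/
noncomputable def matNorm {m : ℕ} (A : Matrix (Fin m) (Fin m) ℝ) : ℝ :=
  ‖fun i => ∑ j, |A i j|‖

/-- The potential `𝒰_n`: `log ‖A_n ⋯ A_1‖` for `n ≥ 1`, `0` for `n = 0`,
and `−log ‖A_0 ⋯ A_{n+1}‖` for `n ≤ −1`. -/
noncomputable def potential {m : ℕ} (A : ℤ → Matrix (Fin m) (Fin m) ℝ) (n : ℤ) : ℝ :=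
  if 1 ≤ n then Real.log (matNorm (prodMat A 0 n.toNat))
  else if n = 0 then 0
  else -Real.log (matNorm (prodMat A n (-n).toNat))

/-!
Write `P(a, b) = A_b ⋯ A_{a+1}` and `γ = ε̄ / c` with `c = (m ε̄)⁻¹`, so that every entry of every
`A_n` lies in `[ε̄, c]`. A left factor `A_n` makes the row sums of a product comparable up to `γ`,
and a right factor makes each entry at least `γ` times its row sum. Comparable row sums make the
norm almost multiplicative, `γ ‖P(b,c)‖ ‖P(a,b)‖ ≤ ‖P(a,c)‖ ≤ ‖P(b,c)‖ ‖P(a,b)‖`; as `𝒰_n` is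
`log ‖P(0,n)‖` or `-log ‖P(n,0)‖`, this pins `‖P(a,b)‖` to `exp (𝒰_b - 𝒰_a)` up to a factor `γ`.
Balanced rows then give `γ² ‖P‖ ‖x‖ ≤ (P x)_i ≤ ‖P‖ ‖x‖` for `x ≥ 0`.
-/

open Finset
open scoped Matrix

section Comparability

variable {ι : Type*} [Fintype ι]

def RowsBalanced (γ : ℝ) (P : Matrix ι ι ℝ) : Prop :=
  ∀ i j, γ * ∑ k, P i k ≤ P i j

def ColumnsComparable (γ : ℝ) (P : Matrix ι ι ℝ) : Prop :=
  ∀ i i' j, γ * P i' j ≤ P i j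

def RowSumsComparable (γ : ℝ) (P : Matrix ι ι ℝ) : Prop :=
  ∀ i i', γ * ∑ k, P i' k ≤ ∑ k, P i k

theorem sum_mul_apply (B C : Matrix ι ι ℝ) (i : ι) :
    ∑ j, (B * C) i j = ∑ l, B i l * ∑ j, C l j := by
  simp only [Matrix.mul_apply, mul_sum]
  exact sum_comm

variable {γ ε c : ℝ} {A P Q : Matrix ι ι ℝ}

theorem div_mul_sum_le_of_le (hε : 0 ≤ ε) (hc : 0 < c) (hrow : ∀ i, ∑ j, P i j ≤ c) (i : ι) :
    ε / c * ∑ k, P i k ≤ ε :=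
  calc ε / c * ∑ k, P i k ≤ ε / c * c := by gcongr; exact hrow i
    _ = ε := div_mul_cancel₀ ε hc.ne'

theorem rowsBalanced_of_le (hε : 0 ≤ ε) (hc : 0 < c) (hP : ∀ i j, ε ≤ P i j)
    (hrow : ∀ i, ∑ j, P i j ≤ c) : RowsBalanced (ε / c) P := fun i j =>
  (div_mul_sum_le_of_le hε hc hrow i).trans (hP i j)

theorem columnsComparable_of_le (hε : 0 ≤ ε) (hc : 0 < c) (hP : ∀ i j, ε ≤ P i j)
    (hrow : ∀ i, ∑ j, P i j ≤ c) : ColumnsComparable (ε / c) P := fun i i' j =>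
  calc ε / c * P i' j ≤ ε / c * ∑ k, P i' k := by
        gcongr
        exact single_le_sum (fun k _ => hε.trans (hP i' k)) (mem_univ j)
    _ ≤ P i j := (div_mul_sum_le_of_le hε hc hrow i').trans (hP i j)

theorem RowsBalanced.mul_left (hA : RowsBalanced γ A) (hQ : ∀ i j, 0 ≤ Q i j) :
    RowsBalanced γ (Q * A) := fun i j => by
  rw [sum_mul_apply, mul_sum, Matrix.mul_apply]
  refine sum_le_sum fun l _ => ?_
  rw [mul_left_comm]
  exact mul_le_mul_of_nonneg_left (hA l j) (hQ i l)

theorem ColumnsComparable.rowSumsComparable_mul (hA : ColumnsComparable γ A)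
    (hQ : ∀ i j, 0 ≤ Q i j) : RowSumsComparable γ (A * Q) := fun i i' => by
  rw [sum_mul_apply, sum_mul_apply, mul_sum]
  refine sum_le_sum fun l _ => ?_
  rw [← mul_assoc]
  exact mul_le_mul_of_nonneg_right (hA i i' l) (sum_nonneg fun j _ => hQ l j)

theorem rowSumsComparable_one [DecidableEq ι] (hγ : γ ≤ 1) :
    RowSumsComparable γ (1 : Matrix ι ι ℝ) :=
  fun i i' => by simpa [Matrix.one_apply] using hγ

end Comparability

section MatNorm

attribute [local instance] Matrix.linftyOpNormedAddCommGroup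

variable {m : ℕ} {γ : ℝ} {P B C : Matrix (Fin m) (Fin m) ℝ}

theorem matNorm_eq_linftyOpNorm (P : Matrix (Fin m) (Fin m) ℝ) : matNorm P = ‖P‖ := by
  rw [matNorm, Matrix.linfty_opNorm_def, Pi.norm_def]
  congr 2
  ext i
  simp [abs_of_nonneg (sum_nonneg fun j _ => abs_nonneg (P i j))]

theorem matNorm_mul_le (B C : Matrix (Fin m) (Fin m) ℝ) :
    matNorm (B * C) ≤ matNorm B * matNorm C := by
  simpa only [matNorm_eq_linftyOpNorm] using Matrix.linfty_opNorm_mul B C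

theorem mulVec_apply_le (P : Matrix (Fin m) (Fin m) ℝ) (x : Fin m → ℝ) (i : Fin m) :
    (P *ᵥ x) i ≤ matNorm P * ‖x‖ :=
  calc (P *ᵥ x) i ≤ ‖P *ᵥ x‖ := (Real.le_norm_self _).trans (norm_le_pi_norm _ i)
    _ ≤ matNorm P * ‖x‖ := by
      simpa only [matNorm_eq_linftyOpNorm] using Matrix.linfty_opNorm_mulVec P x

theorem matNorm_one [NeZero m] : matNorm (1 : Matrix (Fin m) (Fin m) ℝ) = 1 := by
  have : (fun i => ∑ j, |(1 : Matrix (Fin m) (Fin m) ℝ) i j|) = fun _ => 1 := by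
    ext i
    simp [Matrix.one_apply, apply_ite]
  rw [matNorm, this, pi_norm_const, norm_one]

theorem matNorm_le_iff (hP : ∀ i j, 0 ≤ P i j) {M : ℝ} (hM : 0 ≤ M) :
    matNorm P ≤ M ↔ ∀ i, ∑ j, P i j ≤ M := by
  have hrow : ∀ i, ‖∑ j, |P i j|‖ = ∑ j, P i j := fun i => by
    rw [Real.norm_of_nonneg (sum_nonneg fun j _ => abs_nonneg _)]
    exact sum_congr rfl fun j _ => abs_of_nonneg (hP i j)
  simp only [matNorm, pi_norm_le_iff_of_nonneg hM, hrow]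

theorem sum_le_matNorm (hP : ∀ i j, 0 ≤ P i j) (i : Fin m) : ∑ j, P i j ≤ matNorm P :=
  (matNorm_le_iff hP (norm_nonneg _)).1 le_rfl i

theorem matNorm_nonneg (P : Matrix (Fin m) (Fin m) ℝ) : 0 ≤ matNorm P := norm_nonneg _

theorem mul_matNorm_le_of_forall (hP : ∀ i j, 0 ≤ P i j) {t M : ℝ} (ht : 0 ≤ t) (hM : 0 ≤ M)
    (h : ∀ i, t * ∑ j, P i j ≤ M) : t * matNorm P ≤ M := by
  rcases ht.eq_or_lt with rfl | ht
  · rwa [zero_mul]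
  rw [mul_comm, ← le_div_iff₀ ht, matNorm_le_iff hP (div_nonneg hM ht.le)]
  intro i
  rw [le_div_iff₀ ht, mul_comm]
  exact h i

theorem RowSumsComparable.mul_matNorm_le (hγ : 0 ≤ γ) (hP : ∀ i j, 0 ≤ P i j)
    (h : RowSumsComparable γ P) (i : Fin m) : γ * matNorm P ≤ ∑ k, P i k :=
  mul_matNorm_le_of_forall hP hγ (sum_nonneg fun k _ => hP i k) (h i)

theorem mul_matNorm_mul_le (hγ : 0 ≤ γ) (hB : ∀ i j, 0 ≤ B i j) (hC : ∀ i j, 0 ≤ C i j)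
    (hC' : RowSumsComparable γ C) : γ * (matNorm B * matNorm C) ≤ matNorm (B * C) := by
  have hBC : ∀ i j, 0 ≤ (B * C) i j := fun i j => by
    rw [Matrix.mul_apply]
    exact sum_nonneg fun l _ => mul_nonneg (hB i l) (hC l j)
  rw [show γ * (matNorm B * matNorm C) = γ * matNorm C * matNorm B by ring]
  refine mul_matNorm_le_of_forall hB (mul_nonneg hγ (matNorm_nonneg C)) (matNorm_nonneg _)
    fun i => ?_
  calc γ * matNorm C * ∑ j, B i j = ∑ l, B i l * (γ * matNorm C) := by rw [mul_comm, sum_mul]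
    _ ≤ ∑ l, B i l * ∑ j, C l j :=
      sum_le_sum fun l _ => mul_le_mul_of_nonneg_left (hC'.mul_matNorm_le hγ hC l) (hB i l)
    _ ≤ matNorm (B * C) := (sum_mul_apply B C i).symm.trans_le (sum_le_matNorm hBC i)

theorem mul_matNorm_mul_norm_le_mulVec_apply (hγ : 0 ≤ γ) (hP : ∀ i j, 0 ≤ P i j)
    (hbal : RowsBalanced γ P) (hcmp : RowSumsComparable γ P)
    {x : Fin m → ℝ} (hx : ∀ j, 0 ≤ x j) (i : Fin m) :
    γ ^ 2 * matNorm P * ‖x‖ ≤ (P *ᵥ x) i := by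
  have hx' : ‖x‖ ≤ ∑ j, x j :=
    (pi_norm_le_iff_of_nonneg (sum_nonneg fun j _ => hx j)).2 fun j => by
      rw [Real.norm_of_nonneg (hx j)]
      exact single_le_sum (fun k _ => hx k) (mem_univ j)
  have hri := hcmp.mul_matNorm_le hγ hP i
  calc γ ^ 2 * matNorm P * ‖x‖ = γ * (γ * matNorm P) * ‖x‖ := by ring
    _ ≤ γ * (∑ k, P i k) * ∑ j, x j := by
      gcongr
      exact mul_nonneg hγ (sum_nonneg fun k _ => hP i k)
    _ = ∑ j, γ * (∑ k, P i k) * x j := by rw [mul_sum]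
    _ ≤ ∑ j, P i j * x j := sum_le_sum fun j _ => mul_le_mul_of_nonneg_right (hbal i j) (hx j)
    _ = (P *ᵥ x) i := rfl

end MatNorm

theorem almostMultiplicative_bounds {M : ℤ → ℤ → ℝ} {u : ℤ → ℝ} {γ : ℝ} (hγ : 0 ≤ γ) (hγ1 : γ ≤ 1)
    (hsub : ∀ a b c, a ≤ b → b ≤ c → M a c ≤ M b c * M a b)
    (hsup : ∀ a b c, a ≤ b → b ≤ c → γ * (M b c * M a b) ≤ M a c)
    (hnonneg : ∀ n, 0 ≤ n → M 0 n = Real.exp (u n))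
    (hnonpos : ∀ n, n ≤ 0 → M n 0 = Real.exp (-u n)) {a b : ℤ} (hab : a ≤ b) :
    γ * Real.exp (u b - u a) ≤ M a b ∧ γ * M a b ≤ Real.exp (u b - u a) := by
  -- Apply the two inequalities to the triple `(0, a, b)`, `(a, b, 0)` or `(a, 0, b)`.
  set E := Real.exp (u b - u a) with hE_def
  have hE : 0 < E := Real.exp_pos _
  suffices (E ≤ M a b ∧ γ * M a b ≤ E) ∨ (M a b ≤ E ∧ γ * E ≤ M a b) by
    rcases this with ⟨h1, h2⟩ | ⟨h1, h2⟩
    · exact ⟨(mul_le_of_le_one_left hE.le hγ1).trans h1, h2⟩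
    · exact ⟨h2, (mul_le_of_le_one_left ((mul_nonneg hγ hE.le).trans h2) hγ1).trans h1⟩
  rcases le_or_gt 0 a with ha | ha
  · have hsplit : Real.exp (u b) = E * Real.exp (u a) := by
      rw [hE_def, ← Real.exp_add, sub_add_cancel]
    have h1 := hsub 0 a b ha hab
    have h2 := hsup 0 a b ha hab
    rw [hnonneg a ha, hnonneg b (ha.trans hab), hsplit] at h1 h2
    exact Or.inl ⟨le_of_mul_le_mul_right h1 (Real.exp_pos _),
      le_of_mul_le_mul_right (by rwa [← mul_assoc] at h2) (Real.exp_pos _)⟩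
  rcases le_or_gt b 0 with hb | hb
  · have hsplit : Real.exp (-u a) = Real.exp (-u b) * E := by
      rw [hE_def, ← Real.exp_add]; ring_nf
    have h1 := hsub a b 0 hab hb
    have h2 := hsup a b 0 hab hb
    rw [hnonpos a (hab.trans hb), hnonpos b hb, hsplit] at h1 h2
    refine Or.inl ⟨le_of_mul_le_mul_left h1 (Real.exp_pos _),
      le_of_mul_le_mul_left (a := Real.exp (-u b)) ?_ (Real.exp_pos _)⟩
    rwa [mul_left_comm] at h2
  · have hsplit : Real.exp (u b) * Real.exp (-u a) = E := by
      rw [hE_def, ← Real.exp_add]; ring_nf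
    have h1 := hsub a 0 b ha.le hb.le
    have h2 := hsup a 0 b ha.le hb.le
    rw [hnonpos a ha.le, hnonneg b hb.le, hsplit] at h1 h2
    exact Or.inr ⟨h1, h2⟩

section Products

variable {m : ℕ} {A : ℤ → Matrix (Fin m) (Fin m) ℝ} {γ : ℝ}

/-- `A_b ⋯ A_{a+1}`, the identity when `b ≤ a`. -/
def prodBetween (A : ℤ → Matrix (Fin m) (Fin m) ℝ) (a b : ℤ) : Matrix (Fin m) (Fin m) ℝ :=
  prodMat A a (b - a).toNat

theorem prodApply_eq_mulVec (a : ℤ) (ℓ : ℕ) (x : Fin m → ℝ) :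
    prodApply A a ℓ x = prodMat A a ℓ *ᵥ x := by
  induction ℓ with
  | zero => simp [prodApply, prodMat]
  | succ ℓ ih => rw [prodApply, ih, prodMat, Matrix.mulVec_mulVec]

theorem prodMat_add (a : ℤ) (p q : ℕ) :
    prodMat A a (p + q) = prodMat A (a + p) q * prodMat A a p := by
  induction q with
  | zero => simp [prodMat]
  | succ q ih =>
    rw [← add_assoc, prodMat, ih, prodMat, mul_assoc]
    congr 2
    push_cast
    ring

theorem prodBetween_mul {a b c : ℤ} (hab : a ≤ b) (hbc : b ≤ c) :
    prodBetween A b c * prodBetween A a b = prodBetween A a c := by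
  obtain ⟨p, rfl⟩ : ∃ p : ℕ, b = a + p := ⟨(b - a).toNat, by omega⟩
  obtain ⟨q, rfl⟩ : ∃ q : ℕ, c = a + p + q := ⟨(c - (a + p)).toNat, by omega⟩
  rw [prodBetween, prodBetween, prodBetween, show (a + p - a).toNat = p by omega,
    show (a + p + q - (a + p)).toNat = q by omega, show (a + p + q - a).toNat = p + q by omega,
    prodMat_add]

theorem prodBetween_self (a : ℤ) : prodBetween A a a = 1 := by
  simp [prodBetween, prodMat]

theorem prodBetween_succ (a : ℤ) : prodBetween A a (a + 1) = A (a + 1) := by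
  simp [prodBetween, prodMat]

theorem prodMat_nonneg (hA : ∀ n i j, 0 ≤ A n i j) (a : ℤ) (ℓ : ℕ) (i j : Fin m) :
    0 ≤ prodMat A a ℓ i j := by
  induction ℓ generalizing i j with
  | zero =>
    rw [prodMat, Matrix.one_apply]
    split_ifs <;> norm_num
  | succ ℓ ih =>
    rw [prodMat, Matrix.mul_apply]
    exact sum_nonneg fun l _ => mul_nonneg (hA _ _ _) (ih l j)

theorem prodMat_succ_pos [NeZero m] (hA : ∀ n i j, 0 < A n i j) (a : ℤ) (ℓ : ℕ) (i j : Fin m) :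
    0 < prodMat A a (ℓ + 1) i j := by
  induction ℓ generalizing i j with
  | zero => simpa [prodMat] using hA (a + 1) i j
  | succ ℓ ih =>
    rw [prodMat, Matrix.mul_apply]
    exact sum_pos (fun l _ => mul_pos (hA _ _ _) (ih l j)) univ_nonempty

theorem matNorm_prodBetween_pos [NeZero m] (hA : ∀ n i j, 0 < A n i j) {a b : ℤ} (hab : a < b) :
    0 < matNorm (prodBetween A a b) := by
  obtain ⟨ℓ, hℓ⟩ : ∃ ℓ : ℕ, (b - a).toNat = ℓ + 1 := ⟨(b - a).toNat - 1, by omega⟩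
  have hP i j := (prodMat_succ_pos hA a ℓ i j).le
  calc 0 < prodMat A a (ℓ + 1) 0 0 := prodMat_succ_pos hA a ℓ 0 0
    _ ≤ ∑ j, prodMat A a (ℓ + 1) 0 j := single_le_sum (fun j _ => hP 0 j) (mem_univ 0)
    _ ≤ matNorm (prodBetween A a b) := by rw [prodBetween, hℓ]; exact sum_le_matNorm hP 0

theorem rowsBalanced_prodBetween (hA0 : ∀ n i j, 0 ≤ A n i j) (hA : ∀ n, RowsBalanced γ (A n))
    {a b : ℤ} (hab : a < b) : RowsBalanced γ (prodBetween A a b) := by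
  rw [← prodBetween_mul (le_add_of_nonneg_right zero_le_one) (Int.add_one_le_of_lt hab),
    prodBetween_succ]
  exact (hA (a + 1)).mul_left (prodMat_nonneg hA0 _ _)

theorem rowSumsComparable_prodBetween (hγ1 : γ ≤ 1) (hA0 : ∀ n i j, 0 ≤ A n i j)
    (hA : ∀ n, ColumnsComparable γ (A n)) {a b : ℤ} (hab : a ≤ b) :
    RowSumsComparable γ (prodBetween A a b) := by
  rcases hab.eq_or_lt with rfl | hab
  · rw [prodBetween_self]
    exact rowSumsComparable_one hγ1
  have hlast : prodBetween A (b - 1) b = A b := by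
    simpa using prodBetween_succ (A := A) (b - 1)
  rw [← prodBetween_mul (Int.le_sub_one_of_lt hab) (Int.sub_le_self b zero_le_one), hlast]
  exact (hA b).rowSumsComparable_mul (prodMat_nonneg hA0 _ _)

end Products

section Potential

variable {m : ℕ} [NeZero m] {A : ℤ → Matrix (Fin m) (Fin m) ℝ} {γ : ℝ}

theorem exp_potential_of_nonneg (hA : ∀ n i j, 0 < A n i j) {n : ℤ} (hn : 0 ≤ n) :
    Real.exp (potential A n) = matNorm (prodBetween A 0 n) := by
  rcases hn.eq_or_lt with rfl | hn
  · simp [potential, prodBetween_self, matNorm_one]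
  · have hP := matNorm_prodBetween_pos hA hn
    rw [prodBetween, sub_zero] at hP ⊢
    rw [potential, if_pos (by omega), Real.exp_log hP]

theorem exp_neg_potential_of_nonpos (hA : ∀ n i j, 0 < A n i j) {n : ℤ} (hn : n ≤ 0) :
    Real.exp (-potential A n) = matNorm (prodBetween A n 0) := by
  rcases hn.eq_or_lt with rfl | hn
  · simp [potential, prodBetween_self, matNorm_one]
  · have hP := matNorm_prodBetween_pos hA hn
    rw [prodBetween, zero_sub] at hP ⊢
    rw [potential, if_neg (by omega), if_neg hn.ne, neg_neg, Real.exp_log hP]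

theorem matNorm_prodBetween_bounds (hγ : 0 ≤ γ) (hγ1 : γ ≤ 1) (hA : ∀ n i j, 0 < A n i j)
    (hcol : ∀ n, ColumnsComparable γ (A n)) {a b : ℤ} (hab : a ≤ b) :
    γ * Real.exp (potential A b - potential A a) ≤ matNorm (prodBetween A a b) ∧
      γ * matNorm (prodBetween A a b) ≤ Real.exp (potential A b - potential A a) := by
  have hA0 n i j := (hA n i j).le
  refine almostMultiplicative_bounds hγ hγ1 (M := fun a b => matNorm (prodBetween A a b))
    (fun a b c hab hbc => ?_) (fun a b c hab hbc => ?_)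
    (fun n hn => (exp_potential_of_nonneg hA hn).symm)
    (fun n hn => (exp_neg_potential_of_nonpos hA hn).symm) hab
  · show matNorm (prodBetween A a c) ≤ _
    rw [← prodBetween_mul hab hbc]
    exact matNorm_mul_le _ _
  · show _ ≤ matNorm (prodBetween A a c)
    rw [← prodBetween_mul hab hbc]
    exact mul_matNorm_mul_le hγ (prodMat_nonneg hA0 _ _) (prodMat_nonneg hA0 _ _)
      (rowSumsComparable_prodBetween hγ1 hA0 hcol hab)

theorem mulVec_prodBetween_bounds (hγ : 0 ≤ γ) (hγ1 : γ ≤ 1) (hA : ∀ n i j, 0 < A n i j)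
    (hbal : ∀ n, RowsBalanced γ (A n)) (hcol : ∀ n, ColumnsComparable γ (A n))
    {a b : ℤ} (hab : a < b) {x : Fin m → ℝ} (hx : ∀ j, 0 ≤ x j) (i : Fin m) :
    γ ^ 3 * Real.exp (potential A b - potential A a) * ‖x‖ ≤ (prodBetween A a b *ᵥ x) i ∧
      γ * (prodBetween A a b *ᵥ x) i ≤ Real.exp (potential A b - potential A a) * ‖x‖ := by
  have hA0 n i j := (hA n i j).le
  obtain ⟨hlo, hhi⟩ := matNorm_prodBetween_bounds hγ hγ1 hA hcol hab.le
  constructor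
  · calc γ ^ 3 * Real.exp (potential A b - potential A a) * ‖x‖
        = γ ^ 2 * (γ * Real.exp (potential A b - potential A a)) * ‖x‖ := by ring
      _ ≤ γ ^ 2 * matNorm (prodBetween A a b) * ‖x‖ := by gcongr
      _ ≤ (prodBetween A a b *ᵥ x) i :=
        mul_matNorm_mul_norm_le_mulVec_apply hγ (prodMat_nonneg hA0 _ _)
          (rowsBalanced_prodBetween hA0 hbal hab)
          (rowSumsComparable_prodBetween hγ1 hA0 hcol hab.le) hx i
  · calc γ * (prodBetween A a b *ᵥ x) i ≤ γ * (matNorm (prodBetween A a b) * ‖x‖) := by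
          gcongr
          exact mulVec_apply_le _ x i
      _ ≤ Real.exp (potential A b - potential A a) * ‖x‖ := by
          rw [← mul_assoc]
          gcongr

end Potential

theorem bounded_potential_product_bounds_general (m : ℕ) (hm : 1 ≤ m) (εbar C_P : ℝ)
    (hε : 0 < εbar)
    (A : ℤ → Matrix (Fin m) (Fin m) ℝ)
    (hpos : ∀ (n : ℤ) (i j : Fin m), εbar ≤ A n i j)
    (hnorm : ∀ (n : ℤ) (i : Fin m), ∑ j, |A n i j| ≤ ((m : ℝ) * εbar)⁻¹)
    (hpot : ∀ n : ℤ, |potential A n| ≤ C_P) :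
    ∃ Ctil : ℝ, ∀ (n k : ℤ), k < n → ∀ x : Fin m → ℝ,
      (∀ i, 0 ≤ x i) → x ≠ 0 → ∀ i : Fin m,
        Real.exp (-Ctil) * ‖x‖ ≤ prodApply A k (n - k).toNat x i ∧
        prodApply A k (n - k).toNat x i ≤ Real.exp Ctil * ‖x‖ := by
  have : NeZero m := ⟨by omega⟩
  set c := ((m : ℝ) * εbar)⁻¹
  have hc : 0 < c := by positivity
  have hA n i j : 0 < A n i j := hε.trans_le (hpos n i j)
  have hrow n i : ∑ j, A n i j ≤ c := (sum_le_sum fun j _ => le_abs_self _).trans (hnorm n i)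
  set γ := εbar / c
  have hγ : 0 < γ := div_pos hε hc
  have hγ1 : γ ≤ 1 := (div_le_one hc).2 <|
    (hpos 0 0 0).trans <| (single_le_sum (fun j _ => (hA 0 0 j).le) (mem_univ 0)).trans (hrow 0 0)
  refine ⟨2 * C_P - Real.log (γ ^ 3), fun n k hkn x hx _ i => ?_⟩
  obtain ⟨hlo, hhi⟩ := mulVec_prodBetween_bounds hγ.le hγ1 hA
    (fun n => rowsBalanced_of_le hε.le hc (hpos n) (hrow n))
    (fun n => columnsComparable_of_le hε.le hc (hpos n) (hrow n)) hkn hx i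
  have hU := abs_le.1 ((abs_sub _ _).trans (add_le_add (hpot n) (hpot k)))
  rw [prodApply_eq_mulVec]
  constructor
  · calc Real.exp (-(2 * C_P - Real.log (γ ^ 3))) * ‖x‖
          = γ ^ 3 * Real.exp (-(2 * C_P)) * ‖x‖ := by
          rw [neg_sub, Real.exp_sub, Real.exp_log (by positivity), Real.exp_neg, div_eq_mul_inv]
      _ ≤ γ ^ 3 * Real.exp (potential A n - potential A k) * ‖x‖ := by gcongr; linarith
      _ ≤ _ := hlo
  · calc (prodBetween A k n *ᵥ x) i ≤ Real.exp (potential A n - potential A k) * ‖x‖ / γ := by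
          rw [le_div_iff₀ hγ, mul_comm]
          exact hhi
      _ ≤ Real.exp (2 * C_P) * ‖x‖ / γ ^ 3 := by
          gcongr
          · linarith
          · exact pow_le_of_le_one hγ.le hγ1 three_ne_zero
      _ = Real.exp (2 * C_P - Real.log (γ ^ 3)) * ‖x‖ := by
          rw [Real.exp_sub, Real.exp_log (by positivity)]
          ring

/-- a bounded potential implies two-sided coordinatewise bounds on products
of the matrices `A_n` applied to nonnegative vectors (equation (2.28)). Here `‖x‖` is the
sup norm `max_i |x_i|`. -/
theorem bounded_potential_product_bounds (m : ℕ) (hm : 1 ≤ m) (εbar C_P : ℝ)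
    (hε : 0 < εbar) (hCP : 0 < C_P)
    (A : ℤ → Matrix (Fin m) (Fin m) ℝ)
    (hpos : ∀ (n : ℤ) (i j : Fin m), εbar ≤ A n i j)
    (hnorm : ∀ (n : ℤ) (i : Fin m), ∑ j, |A n i j| ≤ ((m : ℝ) * εbar)⁻¹)
    (hpot : ∀ n : ℤ, |potential A n| ≤ C_P) :
    ∃ Ctil : ℝ, ∀ (n k : ℤ), k < n → ∀ x : Fin m → ℝ,
      (∀ i, 0 ≤ x i) → x ≠ 0 → ∀ i : Fin m,
        Real.exp (-Ctil) * ‖x‖ ≤ prodApply A k (n - k).toNat x i ∧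
        prodApply A k (n - k).toNat x i ≤ Real.exp Ctil * ‖x‖ :=
  bounded_potential_product_bounds_general m hm εbar C_P hε A hpos hnorm hpot
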